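/- arXiv:1912.06800 — 6 statements merged into one kernel-verified Lean document; each statement's English description precedes it below -/
import Mathlib

section
/- Let E be a complete real inner product space, let q : E → ℝ be convex and continuous, and suppose prox : E → E is such that for every x ∈ E, prox(x) is the unique minimizer over y ∈ E of (1/2)‖y − x‖² + q(y). Then the Moreau–Yosida regularization θ(x) = (1/2)‖prox(x) − x‖² + q(prox(x)) is differentiable on E, with gradient ∇θ(x) = x − prox(x) at every x ∈ E. -/
/-!
Comparing the objective at `x'` with the competitor `prox x` bounds the remainder
`θ x' - θ x - ⟪x - prox x, x' - x⟫` above by `‖x' - x‖² / 2`. Conversely, convexity of `q`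
turns minimality of `prox x` into the variational inequality
`⟪x - prox x, y - prox x⟫ ≤ q y - q (prox x)`; taking `y = prox x'` shows the remainder is
at least `‖(x' - prox x') - (x - prox x)‖² / 2 ≥ 0`.
-/

open Filter Set Topology RealInnerProductSpace

theorem nonneg_of_forall_mul_add_sq_mul_nonneg {a b : ℝ}
    (h : ∀ t : ℝ, 0 < t → t ≤ 1 → 0 ≤ t * a + t ^ 2 * b) : 0 ≤ a := by
  have hcont : Continuous fun t : ℝ => a + t * b := by fun_prop
  have hlim : Tendsto (fun t : ℝ => a + t * b) (𝓝[>] 0) (𝓝 a) :=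
    (hcont.tendsto' 0 a (by simp)).mono_left nhdsWithin_le_nhds
  refine ge_of_tendsto hlim ?_
  filter_upwards [Ioo_mem_nhdsGT one_pos] with t ht
  exact nonneg_of_mul_nonneg_right (by linarith [h t ht.1 ht.2.le]) ht.1

section InnerProductSpace

variable {E : Type*} [NormedAddCommGroup E] [InnerProductSpace ℝ E]

theorem inner_sub_le_sub_of_isMinOn {s : Set E} {q : E → ℝ} (hq : ConvexOn ℝ s q)
    {x p y : E} (hp : p ∈ s) (hy : y ∈ s)
    (hmin : IsMinOn (fun z => 1 / 2 * ‖z - x‖ ^ 2 + q z) s p) :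
    ⟪x - p, y - p⟫ ≤ q y - q p := by
  suffices 0 ≤ ⟪p - x, y - p⟫ + (q y - q p) by
    rw [← neg_sub p x, inner_neg_left]
    linarith
  refine nonneg_of_forall_mul_add_sq_mul_nonneg (b := 1 / 2 * ‖y - p‖ ^ 2) fun t ht0 ht1 => ?_
  have hconv : q (p + t • (y - p)) ≤ (1 - t) * q p + t * q y := by
    have := hq.2 hp hy (sub_nonneg.2 ht1) ht0.le (sub_add_cancel 1 t)
    rwa [show (1 - t) • p + t • y = p + t • (y - p) by module] at this
  have hle := isMinOn_iff.1 hmin _ (hq.1.add_smul_sub_mem hp hy ⟨ht0.le, ht1⟩)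
  have hexpand : ‖p + t • (y - p) - x‖ ^ 2
      = ‖p - x‖ ^ 2 + 2 * (t * ⟪p - x, y - p⟫) + t ^ 2 * ‖y - p‖ ^ 2 := by
    rw [show p + t • (y - p) - x = (p - x) + t • (y - p) by abel, norm_add_sq_real,
      real_inner_smul_right, norm_smul, mul_pow, Real.norm_eq_abs, sq_abs]
  simp only [hexpand] at hle
  linarith

/-- This is the Moreau–Yosida regularization `θ` of `q` when `prox` is its proximal map. -/
noncomputable def moreauEnvelope (q : E → ℝ) (prox : E → E) (x : E) : ℝ :=
  1 / 2 * ‖prox x - x‖ ^ 2 + q (prox x)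

section MoreauEnvelope

variable {q : E → ℝ} {prox : E → E}
  (hmin : ∀ x y : E, 1 / 2 * ‖prox x - x‖ ^ 2 + q (prox x) ≤ 1 / 2 * ‖y - x‖ ^ 2 + q y)
include hmin

theorem moreauEnvelope_sub_sub_inner_le (x x' : E) :
    moreauEnvelope q prox x' - moreauEnvelope q prox x - ⟪x - prox x, x' - x⟫
      ≤ 1 / 2 * ‖x' - x‖ ^ 2 := by
  have hle := hmin x' (prox x)
  rw [show prox x - x' = (prox x - x) - (x' - x) by abel, norm_sub_sq_real (prox x - x)] at hle
  rw [← neg_sub (prox x) x, inner_neg_left]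
  unfold moreauEnvelope
  linarith

theorem moreauEnvelope_sub_sub_inner_nonneg (hq : ConvexOn ℝ univ q) (x x' : E) :
    0 ≤ moreauEnvelope q prox x' - moreauEnvelope q prox x - ⟪x - prox x, x' - x⟫ := by
  have hvar : ⟪x - prox x, prox x' - prox x⟫ ≤ q (prox x') - q (prox x) :=
    inner_sub_le_sub_of_isMinOn hq (mem_univ _) (mem_univ _)
      (isMinOn_iff.2 fun y _ => hmin x y)
  have hsq := sq_nonneg ‖(x' - prox x') - (x - prox x)‖
  rw [norm_sub_sq_real] at hsq
  rw [show x' - x = ((x' - prox x') - (x - prox x)) + (prox x' - prox x) by abel,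
    inner_add_right, inner_sub_right, real_inner_self_eq_norm_sq]
  unfold moreauEnvelope
  rw [norm_sub_rev (prox x'), norm_sub_rev (prox x), real_inner_comm (x' - prox x')]
  linarith

end MoreauEnvelope

theorem hasGradientAt_of_abs_sub_sub_inner_le [CompleteSpace E] {f : E → ℝ} {g x : E} (C : ℝ)
    (h : ∀ y, |f y - f x - ⟪g, y - x⟫| ≤ C * ‖y - x‖ ^ 2) : HasGradientAt f g x := by
  rw [hasGradientAt_iff_isLittleO]
  refine (Asymptotics.IsBigO.of_bound C (Eventually.of_forall fun y => ?_)).trans_isLittleO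
    (Asymptotics.isLittleO_pow_sub_sub x one_lt_two)
  rw [Real.norm_eq_abs, norm_pow, norm_norm]
  exact h y

end InnerProductSpace

theorem stmt_4_general {E : Type*} [NormedAddCommGroup E] [InnerProductSpace ℝ E] [CompleteSpace E]
    (q : E → ℝ) (hq : ConvexOn ℝ Set.univ q)
    (prox : E → E)
    (hmin : ∀ x : E, ∀ y : E,
      (1 / 2) * ‖prox x - x‖ ^ 2 + q (prox x) ≤ (1 / 2) * ‖y - x‖ ^ 2 + q y) :
    ∀ x : E,
      HasGradientAt (fun x' : E => (1 / 2) * ‖prox x' - x'‖ ^ 2 + q (prox x'))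
        (x - prox x) x := by
  intro x
  refine hasGradientAt_of_abs_sub_sub_inner_le (f := moreauEnvelope q prox) (1 / 2) fun x' => ?_
  exact abs_le.2 ⟨by linarith [moreauEnvelope_sub_sub_inner_nonneg hmin hq x x', sq_nonneg ‖x' - x‖],
    moreauEnvelope_sub_sub_inner_le hmin x x'⟩

/-- Let `E` be a complete real inner product space, `q : E → ℝ` convex and
continuous, and `prox : E → E` such that `prox x` is the unique minimizer of
`y ↦ (1/2)‖y − x‖² + q(y)`. Then the Moreau–Yosida regularization
`θ(x) = (1/2)‖prox x − x‖² + q(prox x)` is differentiable with `∇θ(x) = x − prox x`. -/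
theorem stmt_4 {E : Type*} [NormedAddCommGroup E] [InnerProductSpace ℝ E] [CompleteSpace E]
    (q : E → ℝ) (hq : ConvexOn ℝ Set.univ q) (hqc : Continuous q)
    (prox : E → E)
    (hmin : ∀ x : E, ∀ y : E,
      (1 / 2) * ‖prox x - x‖ ^ 2 + q (prox x) ≤ (1 / 2) * ‖y - x‖ ^ 2 + q y)
    (huniq : ∀ x : E, ∀ y : E,
      (∀ y' : E, (1 / 2) * ‖y - x‖ ^ 2 + q y ≤ (1 / 2) * ‖y' - x‖ ^ 2 + q y') →
      y = prox x) :
    ∀ x : E,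
      HasGradientAt (fun x' : E => (1 / 2) * ‖prox x' - x'‖ ^ 2 + q (prox x'))
        (x - prox x) x :=
  stmt_4_general q hq prox hmin
end

section
/- Let C > 0, ε > 0, m ∈ ℕ and y ∈ ℝ^m with ‖y‖_∞ ≤ C, i.e. |y_i| ≤ C for all i. Then the supremum over x ∈ ℝ^m of ⟨x, y⟩ − C·∑_{i=1}^m max(0, |x_i| − ε) equals ε·‖y‖₁ = ε·∑_{i=1}^m |y_i|. -/
/-!
Coordinatewise, `a b ≤ |a| |b| ≤ (ε + max 0 (|a| - ε)) |b|`, and `|b| ≤ C` bounds the second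
term by the penalty, so every value is at most `ε ∑ |yᵢ|`. The point `xᵢ = ε · sign yᵢ` lies in
the penalty-free box `|xᵢ| ≤ ε` and attains this bound.
-/

open RealInnerProductSpace

theorem mul_sub_mul_max_abs_sub_le {a b C ε : ℝ} (hb : |b| ≤ C) :
    a * b - C * max 0 (|a| - ε) ≤ ε * |b| := by
  have hab : a * b ≤ |a| * |b| := (le_abs_self _).trans (abs_mul a b).le
  have ha : |a| ≤ ε + max 0 (|a| - ε) := by linarith [le_max_right 0 (|a| - ε)]
  have hpen : max 0 (|a| - ε) * |b| ≤ max 0 (|a| - ε) * C :=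
    mul_le_mul_of_nonneg_left hb (le_max_left _ _)
  nlinarith [abs_nonneg b]

theorem abs_mul_sign_le {ε : ℝ} (hε : 0 ≤ ε) (b : ℝ) : |ε * SignType.sign b| ≤ ε := by
  rw [abs_mul, abs_of_nonneg hε]
  have : |(SignType.sign b : ℝ)| ≤ 1 := by cases SignType.sign b <;> simp
  nlinarith

theorem max_abs_mul_sign_sub_eq_zero {ε : ℝ} (hε : 0 ≤ ε) (b : ℝ) :
    max 0 (|ε * SignType.sign b| - ε) = 0 :=
  max_eq_left (by linarith [abs_mul_sign_le hε b])

theorem stmt_9_general (C ε : ℝ) (hε : 0 < ε) (m : ℕ)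
    (y : EuclideanSpace ℝ (Fin m)) (hy : ∀ i : Fin m, |y i| ≤ C) :
    IsLUB (Set.range fun x : EuclideanSpace ℝ (Fin m) =>
      ⟪x, y⟫ - C * ∑ i, max 0 (|x i| - ε)) (ε * ∑ i, |y i|) := by
  simp only [PiLp.inner_apply, RCLike.inner_apply, conj_trivial, Finset.mul_sum]
  constructor
  · rintro _ ⟨x, rfl⟩
    show _ - _ ≤ _
    rw [← Finset.sum_sub_distrib]
    exact Finset.sum_le_sum fun i _ => by
      simpa only [mul_comm (y i)] using mul_sub_mul_max_abs_sub_le (a := x i) (ε := ε) (hy i)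
  · intro b hb
    let x : EuclideanSpace ℝ (Fin m) := WithLp.toLp 2 fun i => ε * SignType.sign (y i)
    convert hb ⟨x, rfl⟩ using 1
    simp only [x, max_abs_mul_sign_sub_eq_zero hε.le, mul_zero,
      Finset.sum_const_zero, sub_zero]
    exact Finset.sum_congr rfl fun i _ => by rw [mul_left_comm, self_mul_sign]

/-- For `C > 0`, `ε > 0` and `y ∈ ℝ^m` with `|yᵢ| ≤ C` for all `i`, the
supremum over `x ∈ ℝ^m` of `⟨x, y⟩ − C·∑ᵢ max(0, |xᵢ| − ε)` equals `ε·∑ᵢ |yᵢ|`. -/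
theorem stmt_9 (C ε : ℝ) (hC : 0 < C) (hε : 0 < ε) (m : ℕ)
    (y : EuclideanSpace ℝ (Fin m)) (hy : ∀ i : Fin m, |y i| ≤ C) :
    IsLUB (Set.range fun x : EuclideanSpace ℝ (Fin m) =>
      ⟪x, y⟫ - C * ∑ i, max 0 (|x i| - ε)) (ε * ∑ i, |y i|) :=
  stmt_9_general C ε hε m y hy
end

section
/- Let C > 0, ε > 0, M > 0 and z ∈ ℝ. The function s ↦ (1/(2M))(z − s)² + C·max(0, |s| − ε) on ℝ attains its minimum at a unique point s*, and s* = z − C·M if z ≥ ε + C·M, s* = ε if ε < z < ε + C·M, s* = z if |z| ≤ ε, s* = −ε if −ε − C·M < z < −ε, and s* = z + C·M if z ≤ −ε − C·M. -/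
/-!
The objective is the strongly convex quadratic `(1/(2M))(z - s)²` plus the convex penalty
`g(s) = C·max(0, |s| - ε)`. If `(z - s)/M` is a subgradient of `g` at `s`, expanding the square
around `s` shows that the objective at any `t` exceeds its value at `s` by at least
`(1/(2M))(t - s)²`, so `s` is the unique minimizer. In each of the five regions of `z` the
announced point admits such a subgradient: `±C` where `|s| > ε`, a value in `[0, C]` (resp.
`[-C, 0]`) at the kink `s = ε` (resp. `s = -ε`), and `0` on the flat part `|s| ≤ ε`.
-/

def HasSubgradientAt (g : ℝ → ℝ) (v s : ℝ) : Prop :=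
  ∀ t, g s + v * (t - s) ≤ g t

section Prox

variable {g : ℝ → ℝ} {M z s : ℝ}

theorem add_sq_le_of_hasSubgradientAt (hM : 0 < M) (hg : HasSubgradientAt g ((z - s) / M) s)
    (t : ℝ) :
    1 / (2 * M) * (z - s) ^ 2 + g s + 1 / (2 * M) * (t - s) ^ 2 ≤
      1 / (2 * M) * (z - t) ^ 2 + g t := by
  have expand : 1 / (2 * M) * (z - t) ^ 2 =
      1 / (2 * M) * (z - s) ^ 2 - (z - s) / M * (t - s) + 1 / (2 * M) * (t - s) ^ 2 := by
    field_simp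
    ring
  linarith [hg t]

theorem isUniqueMinimizer_of_hasSubgradientAt (hM : 0 < M)
    (hg : HasSubgradientAt g ((z - s) / M) s) :
    (∀ t, 1 / (2 * M) * (z - s) ^ 2 + g s ≤ 1 / (2 * M) * (z - t) ^ 2 + g t) ∧
      ∀ s', (∀ t, 1 / (2 * M) * (z - s') ^ 2 + g s' ≤ 1 / (2 * M) * (z - t) ^ 2 + g t) →
        s' = s := by
  have hcoef : 0 < 1 / (2 * M) := by positivity
  refine ⟨fun t => ?_, fun s' hs' => ?_⟩
  · nlinarith [add_sq_le_of_hasSubgradientAt hM hg t, sq_nonneg (t - s)]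
  · have hsq : 1 / (2 * M) * (s' - s) ^ 2 ≤ 0 := by
      linarith [add_sq_le_of_hasSubgradientAt hM hg s', hs' s]
    have : (s' - s) ^ 2 = 0 :=
      le_antisymm (nonpos_of_mul_nonpos_right hsq hcoef) (sq_nonneg _)
    linarith [pow_eq_zero_iff two_ne_zero |>.mp this]

end Prox

section EpsInsensitive

variable {C ε v s : ℝ}

theorem HasSubgradientAt.neg_of_even {g : ℝ → ℝ} (heven : ∀ t, g (-t) = g t)
    (hg : HasSubgradientAt g v s) : HasSubgradientAt g (-v) (-s) := by
  intro t
  have h := hg (-t)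
  rw [heven t] at h
  rw [heven s]
  linarith

theorem epsInsensitive_even (C ε t : ℝ) :
    C * max 0 (|-t| - ε) = C * max 0 (|t| - ε) := by
  rw [abs_neg]

theorem epsInsensitive_hasSubgradientAt_of_le (hC : 0 ≤ C) (hε : 0 ≤ ε) (hs : ε ≤ s) :
    HasSubgradientAt (fun t => C * max 0 (|t| - ε)) C s := by
  intro t
  have hpen : max 0 (|s| - ε) = s - ε := by
    rw [abs_of_nonneg (by linarith : 0 ≤ s)]
    exact max_eq_right (by linarith)
  have ht : t - ε ≤ max 0 (|t| - ε) := le_max_of_le_right (by linarith [le_abs_self t])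
  simp only [hpen]
  nlinarith

theorem epsInsensitive_hasSubgradientAt_eps (hε : 0 ≤ ε) (hv₀ : 0 ≤ v) (hvC : v ≤ C) :
    HasSubgradientAt (fun t => C * max 0 (|t| - ε)) v ε := by
  intro t
  have hpen : max 0 (|ε| - ε) = 0 := by simp [abs_of_nonneg hε]
  have hpos : 0 ≤ max 0 (|t| - ε) := le_max_left _ _
  have ht : t - ε ≤ max 0 (|t| - ε) := le_max_of_le_right (by linarith [le_abs_self t])
  simp only [hpen]
  rcases le_total t ε with hle | hge <;> nlinarith

theorem epsInsensitive_hasSubgradientAt_zero (hC : 0 ≤ C) (hs : |s| ≤ ε) :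
    HasSubgradientAt (fun t => C * max 0 (|t| - ε)) 0 s := by
  intro t
  have hpen : max 0 (|s| - ε) = 0 := max_eq_left (by linarith)
  have hpos : 0 ≤ max 0 (|t| - ε) := le_max_left _ _
  simp only [hpen]
  nlinarith

noncomputable def epsInsensitiveProx (C ε M z : ℝ) : ℝ :=
  if ε + C * M ≤ z then z - C * M
  else if ε < z then ε
  else if -ε ≤ z then z
  else if -ε - C * M < z then -ε
  else z + C * M

theorem epsInsensitive_hasSubgradientAt_prox (hC : 0 < C) (hε : 0 < ε) {M : ℝ} (hM : 0 < M)
    (z : ℝ) :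
    HasSubgradientAt (fun t => C * max 0 (|t| - ε))
      ((z - epsInsensitiveProx C ε M z) / M) (epsInsensitiveProx C ε M z) := by
  have heven := epsInsensitive_even C ε
  unfold epsInsensitiveProx
  split_ifs with h₁ h₂ h₃ h₄
  · rw [show (z - (z - C * M)) / M = C by field_simp; ring]
    exact epsInsensitive_hasSubgradientAt_of_le hC.le hε.le (by linarith)
  · refine epsInsensitive_hasSubgradientAt_eps hε.le (div_nonneg (by linarith) hM.le) ?_
    rw [div_le_iff₀ hM]
    linarith
  · rw [sub_self, zero_div]
    exact epsInsensitive_hasSubgradientAt_zero hC.le (abs_le.mpr ⟨h₃, by linarith⟩)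
  · have hv : -((z + ε) / M) ≤ C := by
      rw [neg_le, le_div_iff₀ hM]
      linarith
    have := (epsInsensitive_hasSubgradientAt_eps hε.le
      (neg_nonneg.mpr (div_nonpos_of_nonpos_of_nonneg (by linarith) hM.le)) hv).neg_of_even heven
    rwa [neg_neg, ← sub_neg_eq_add] at this
  · rw [show (z - (z + C * M)) / M = -C by field_simp; ring]
    have := (epsInsensitive_hasSubgradientAt_of_le (s := -(z + C * M)) hC.le hε.le
      (by linarith)).neg_of_even heven
    rwa [neg_neg] at this

end EpsInsensitive

/-- For `C > 0`, `ε > 0`, `M > 0`, `z : ℝ`, the function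
`s ↦ (1/(2M))(z − s)² + C·max(0, |s| − ε)` attains its minimum at a unique point `s*`,
with `s* = z − C·M` if `z ≥ ε + C·M`, `s* = ε` if `ε < z < ε + C·M`, `s* = z` if `|z| ≤ ε`,
`s* = −ε` if `−ε − C·M < z < −ε`, and `s* = z + C·M` if `z ≤ −ε − C·M`. -/
theorem stmt_10 (C ε M z : ℝ) (hC : 0 < C) (hε : 0 < ε) (hM : 0 < M) :
    ∃ s : ℝ,
      (∀ t : ℝ, (1 / (2 * M)) * (z - s) ^ 2 + C * max 0 (|s| - ε) ≤
        (1 / (2 * M)) * (z - t) ^ 2 + C * max 0 (|t| - ε)) ∧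
      (∀ s' : ℝ, (∀ t : ℝ, (1 / (2 * M)) * (z - s') ^ 2 + C * max 0 (|s'| - ε) ≤
        (1 / (2 * M)) * (z - t) ^ 2 + C * max 0 (|t| - ε)) → s' = s) ∧
      (ε + C * M ≤ z → s = z - C * M) ∧
      (ε < z ∧ z < ε + C * M → s = ε) ∧
      (|z| ≤ ε → s = z) ∧
      (-ε - C * M < z ∧ z < -ε → s = -ε) ∧
      (z ≤ -ε - C * M → s = z + C * M) := by
  have hmin := isUniqueMinimizer_of_hasSubgradientAt hM
    (epsInsensitive_hasSubgradientAt_prox hC hε hM z)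
  have hCM : 0 < C * M := mul_pos hC hM
  refine ⟨epsInsensitiveProx C ε M z, hmin.1, hmin.2, ?_, ?_, ?_, ?_, ?_⟩ <;>
    intro h <;> unfold epsInsensitiveProx
  all_goals split_ifs <;> first | rfl | linarith [abs_le.mp h] | linarith [h.1, h.2] | linarith
end

section
/- Let C > 0, σ > 0, m, n ∈ ℕ, B ∈ ℝ^{m×n}, d ∈ ℝ^m, λ ∈ ℝ^m and w ∈ ℝ^n, and set z = B·w + d + λ/σ. Then the function s ↦ L_σ(w, s; λ) on ℝ^m attains its minimum at a unique point s*, whose i-th coordinate equals z_i − C/σ if z_i > C/σ, equals z_i if z_i < 0, and equals 0 if 0 ≤ z_i ≤ C/σ. -/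
/-!
Completing the square in `⟪λ, ·⟫` turns `s ↦ L_σ(w, s; λ)` into, up to a constant,
`C ∑ᵢ max(sᵢ, 0) + (σ/2)‖s - z‖²`, which separates into scalar problems. Each scalar problem
`x ↦ c·max(x, 0) + (x - z)²/2` with `c = C/σ` is minimized by soft thresholding `z` towards `0`,
and being `1`-strongly convex it grows at least by `(x - x*)²/2` away from that minimizer `x*`.
Summed over the coordinates this quadratic growth gives both minimality and uniqueness.
-/

open RealInnerProductSpace

noncomputable def toEuc {m : ℕ} (v : Fin m → ℝ) : EuclideanSpace ℝ (Fin m) :=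
  (EuclideanSpace.equiv (Fin m) ℝ).symm v

lemma eq_of_le_of_quadratic_growth {E : Type*} [NormedAddCommGroup E] {f : E → ℝ} {s s' : E}
    {c : ℝ} (hc : 0 < c) (hs : ∀ t, f s + c * ‖t - s‖ ^ 2 ≤ f t) (hs' : f s' ≤ f s) :
    s' = s := by
  have h : c * ‖s' - s‖ ^ 2 ≤ c * 0 := by linarith [hs s']
  rw [← sub_eq_zero, ← norm_eq_zero, ← sq_eq_zero_iff]
  exact le_antisymm (le_of_mul_le_mul_left h hc) (sq_nonneg _)

lemma neg_inner_add_mul_norm_sq {E : Type*} [NormedAddCommGroup E] [InnerProductSpace ℝ E]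
    {σ : ℝ} (hσ : σ ≠ 0) (lam u : E) :
    -⟪lam, u⟫ + σ / 2 * ‖u‖ ^ 2 = σ / 2 * ‖u - σ⁻¹ • lam‖ ^ 2 - ‖lam‖ ^ 2 / (2 * σ) := by
  rw [norm_sub_sq_real, real_inner_smul_right, norm_smul, mul_pow, Real.norm_eq_abs, sq_abs,
    real_inner_comm]
  field_simp
  ring

/-- The proximal point of `x ↦ c * max x 0` at `z`, i.e. the minimizer of
`x ↦ c * max x 0 + (x - z) ^ 2 / 2` for `0 ≤ c`. -/
noncomputable def proxPosPart (c z : ℝ) : ℝ :=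
  if c < z then z - c else if z < 0 then z else 0

lemma proxPosPart_of_lt {c z : ℝ} (h : c < z) : proxPosPart c z = z - c := if_pos h

lemma proxPosPart_of_neg {c z : ℝ} (hc : 0 ≤ c) (h : z < 0) : proxPosPart c z = z := by
  rw [proxPosPart, if_neg (by linarith), if_pos h]

lemma proxPosPart_of_mem_Icc {c z : ℝ} (h : z ∈ Set.Icc 0 c) : proxPosPart c z = 0 := by
  rw [proxPosPart, if_neg (not_lt.2 h.2), if_neg (not_lt.2 h.1)]

lemma proxPosPart_quadratic_growth {c : ℝ} (hc : 0 ≤ c) (z x : ℝ) :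
    c * max (proxPosPart c z) 0 + (proxPosPart c z - z) ^ 2 / 2 + (x - proxPosPart c z) ^ 2 / 2
      ≤ c * max x 0 + (x - z) ^ 2 / 2 := by
  have hx : x ≤ max x 0 := le_max_left x 0
  have hx0 : 0 ≤ max x 0 := le_max_right x 0
  unfold proxPosPart
  split_ifs with hcz hz
  · rw [max_eq_left (by linarith)]
    nlinarith
  · rw [max_eq_right hz.le]
    nlinarith
  · rw [max_self]
    rcases le_total x 0 with hx' | hx'
    · rw [max_eq_right hx']
      nlinarith
    · rw [max_eq_left hx']
      nlinarith

section Coordinatewise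

variable {ι : Type*}

noncomputable def proxSumPosPart (c : ℝ) (z : EuclideanSpace ℝ ι) : EuclideanSpace ℝ ι :=
  WithLp.toLp 2 fun i => proxPosPart c (z i)

lemma proxSumPosPart_apply (c : ℝ) (z : EuclideanSpace ℝ ι) (i : ι) :
    proxSumPosPart c z i = proxPosPart c (z i) := rfl

lemma proxSumPosPart_quadratic_growth [Fintype ι] {C σ : ℝ} (hC : 0 ≤ C) (hσ : 0 < σ)
    (z t : EuclideanSpace ℝ ι) :
    let s := proxSumPosPart (C / σ) z
    C * ∑ i, max (s i) 0 + σ / 2 * ‖s - z‖ ^ 2 + σ / 2 * ‖t - s‖ ^ 2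
      ≤ C * ∑ i, max (t i) 0 + σ / 2 * ‖t - z‖ ^ 2 := by
  intro s
  have hC' : C = σ * (C / σ) := (mul_div_cancel₀ C hσ.ne').symm
  simp only [EuclideanSpace.norm_sq_eq, PiLp.sub_apply, Real.norm_eq_abs, sq_abs, Finset.mul_sum,
    ← Finset.sum_add_distrib]
  refine Finset.sum_le_sum fun i _ => ?_
  have := mul_le_mul_of_nonneg_left
    (proxPosPart_quadratic_growth (div_nonneg hC hσ.le) (z i) (t i)) hσ.le
  rw [hC']
  simp only [s, proxSumPosPart_apply]
  linarith

end Coordinatewise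

/-- With `z = Bw + d + λ/σ`, the function `s ↦ L_σ(w, s; λ)`, where
`L_σ(w, s; λ) = (1/2)‖w‖² + C·∑ᵢ max(sᵢ, 0) − ⟨λ, s − Bw − d⟩ + (σ/2)‖s − Bw − d‖²`,
attains its minimum at a unique point `s*` with `s*ᵢ = zᵢ − C/σ` if `zᵢ > C/σ`,
`s*ᵢ = zᵢ` if `zᵢ < 0`, and `s*ᵢ = 0` if `0 ≤ zᵢ ≤ C/σ`. -/
theorem stmt_15 (C σ : ℝ) (hC : 0 < C) (hσ : 0 < σ) (m n : ℕ)
    (B : Matrix (Fin m) (Fin n) ℝ) (d lam : EuclideanSpace ℝ (Fin m))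
    (w : EuclideanSpace ℝ (Fin n)) (z : EuclideanSpace ℝ (Fin m))
    (hz : z = toEuc (B.mulVec w) + d + σ⁻¹ • lam) :
    ∃ s : EuclideanSpace ℝ (Fin m),
      (∀ t : EuclideanSpace ℝ (Fin m),
        (1 / 2) * ‖w‖ ^ 2 + C * ∑ i, max (s i) 0 - ⟪lam, s - toEuc (B.mulVec w) - d⟫ +
            (σ / 2) * ‖s - toEuc (B.mulVec w) - d‖ ^ 2 ≤
          (1 / 2) * ‖w‖ ^ 2 + C * ∑ i, max (t i) 0 - ⟪lam, t - toEuc (B.mulVec w) - d⟫ +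
            (σ / 2) * ‖t - toEuc (B.mulVec w) - d‖ ^ 2) ∧
      (∀ s' : EuclideanSpace ℝ (Fin m),
        (∀ t : EuclideanSpace ℝ (Fin m),
          (1 / 2) * ‖w‖ ^ 2 + C * ∑ i, max (s' i) 0 - ⟪lam, s' - toEuc (B.mulVec w) - d⟫ +
              (σ / 2) * ‖s' - toEuc (B.mulVec w) - d‖ ^ 2 ≤
            (1 / 2) * ‖w‖ ^ 2 + C * ∑ i, max (t i) 0 - ⟪lam, t - toEuc (B.mulVec w) - d⟫ +
              (σ / 2) * ‖t - toEuc (B.mulVec w) - d‖ ^ 2) → s' = s) ∧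
      ∀ i : Fin m,
        (C / σ < z i → s i = z i - C / σ) ∧
        (z i < 0 → s i = z i) ∧
        (0 ≤ z i ∧ z i ≤ C / σ → s i = 0) := by
  set y := toEuc (B.mulVec w)
  set L : EuclideanSpace ℝ (Fin m) → ℝ := fun t =>
    (1 / 2) * ‖w‖ ^ 2 + C * ∑ i, max (t i) 0 - ⟪lam, t - y - d⟫ + (σ / 2) * ‖t - y - d‖ ^ 2
  have hL (t) : L t = (1 / 2) * ‖w‖ ^ 2 - ‖lam‖ ^ 2 / (2 * σ) +
      (C * ∑ i, max (t i) 0 + σ / 2 * ‖t - z‖ ^ 2) := by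
    have := neg_inner_add_mul_norm_sq hσ.ne' lam (t - y - d)
    rw [hz, sub_add_eq_sub_sub, sub_add_eq_sub_sub]
    simp only [L]
    linarith
  set s := proxSumPosPart (C / σ) z
  have growth (t) : L s + σ / 2 * ‖t - s‖ ^ 2 ≤ L t := by
    rw [hL, hL]
    linarith [proxSumPosPart_quadratic_growth hC.le hσ z t, sq_nonneg ‖s - z‖]
  have hCσ : 0 ≤ C / σ := div_nonneg hC.le hσ.le
  exact ⟨s, fun t => (le_add_of_nonneg_right (by positivity)).trans (growth t),
    fun s' hs' => eq_of_le_of_quadratic_growth (half_pos hσ) growth (hs' s),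
    fun i => ⟨proxPosPart_of_lt, proxPosPart_of_neg hCσ, proxPosPart_of_mem_Icc⟩⟩
end

section
/- Let C > 0, σ > 0, m, n ∈ ℕ, B ∈ ℝ^{m×n}, d ∈ ℝ^m and λ ∈ ℝ^m. Define φ : ℝ^n → ℝ by φ(w) = inf over s ∈ ℝ^m of L_σ(w, s; λ). Then φ is differentiable at every w ∈ ℝ^n, with gradient ∇φ(w) = w + Bᵀλ − σ·Bᵀ(s*(w) − B·w − d), where s*(w) ∈ ℝ^m is given componentwise, with z = B·w + d + λ/σ, by s*(w)_i = z_i − C/σ if z_i > C/σ, s*(w)_i = z_i if z_i < 0, and s*(w)_i = 0 if 0 ≤ z_i ≤ C/σ. -/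
/-!
Completing the square in `s` turns `L_σ(w, s; λ)` into
`½‖w‖² - ‖λ‖²/(2σ) + ∑ᵢ (C·max(sᵢ, 0) + σ/2·(sᵢ - zᵢ)²)` with `z = Bw + d + λ/σ`, so the
minimisation over `s` splits into scalar problems. Each is the Moreau envelope of the hinge
`C·max(·, 0)`, which equals `σ/2·(max(z, 0)² - max(z - C/σ, 0)²)`: a `C¹` function of `z` whose
derivative `σ·(z - s*(z))` is read off from the soft-thresholding minimiser `s*`. The chain rule
through the affine map `w ↦ z` then gives the gradient `w + σ·Bᵀ(z - s*)`.
-/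

open RealInnerProductSpace Matrix

open Set

section Gradient

variable {F : Type*} [NormedAddCommGroup F] [InnerProductSpace ℝ F] [CompleteSpace F]
  {f g : F → ℝ} {f' g' x : F}

theorem HasGradientAt.add (hf : HasGradientAt f f' x) (hg : HasGradientAt g g' x) :
    HasGradientAt (fun y => f y + g y) (f' + g') x := by
  rw [hasGradientAt_iff_hasFDerivAt, map_add]
  exact hf.hasFDerivAt.add hg.hasFDerivAt

theorem HasGradientAt.sub_const (hf : HasGradientAt f f' x) (c : ℝ) :
    HasGradientAt (fun y => f y - c) f' x :=
  hasGradientAt_iff_hasFDerivAt.mpr (hf.hasFDerivAt.sub_const c)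

theorem hasGradientAt_half_norm_sq (x : F) : HasGradientAt (fun y => (1 / 2) * ‖y‖ ^ 2) x x := by
  rw [hasGradientAt_iff_hasFDerivAt]
  refine (((hasFDerivAt_id x).norm_sq).const_mul (1 / 2 : ℝ)).congr_fderiv ?_
  ext v
  simp

end Gradient

theorem hasGradientAt_sum_apply {ι : Type*} [Fintype ι] {f : ι → ℝ → ℝ} {f' : ι → ℝ}
    {x : EuclideanSpace ℝ ι} (hf : ∀ i, HasDerivAt (f i) (f' i) (x i)) :
    HasGradientAt (fun y : EuclideanSpace ℝ ι => ∑ i, f i (y i)) (WithLp.toLp 2 f') x := by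
  rw [hasGradientAt_iff_hasFDerivAt]
  refine (HasFDerivAt.fun_sum (u := Finset.univ) fun i _ =>
    (hf i).comp_hasFDerivAt x (EuclideanSpace.proj (𝕜 := ℝ) i).hasFDerivAt).congr_fderiv ?_
  ext v
  simp [PiLp.inner_apply, mul_comm]

theorem toEuc_mulVec {m n : ℕ} (A : Matrix (Fin m) (Fin n) ℝ) (v : EuclideanSpace ℝ (Fin n)) :
    toEuc (A *ᵥ v) = toEuclideanLin A v := rfl

theorem HasGradientAt.comp_toEuclideanLin_add {m n : ℕ} {f : EuclideanSpace ℝ (Fin m) → ℝ}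
    {g c : EuclideanSpace ℝ (Fin m)} (A : Matrix (Fin m) (Fin n) ℝ) {x : EuclideanSpace ℝ (Fin n)}
    (hf : HasGradientAt f g (toEuclideanLin A x + c)) :
    HasGradientAt (fun y => f (toEuclideanLin A y + c)) (toEuclideanLin Aᵀ g) x := by
  rw [hasGradientAt_iff_hasFDerivAt] at hf ⊢
  refine (hf.comp x
    ((LinearMap.toContinuousLinearMap (toEuclideanLin A)).hasFDerivAt.add_const c)).congr_fderiv ?_
  ext v
  simp [← conjTranspose_eq_transpose_of_trivial, toEuclideanLin_conjTranspose_eq_adjoint,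
    LinearMap.adjoint_inner_left]

noncomputable def hingeEnvelope (C σ z : ℝ) : ℝ :=
  σ / 2 * (max z 0 ^ 2 - max (z - C / σ) 0 ^ 2)

theorem hasDerivAt_max_zero_sq (x : ℝ) :
    HasDerivAt (fun t : ℝ => max t 0 ^ 2) (2 * max x 0) x := by
  have off_zero : ∀ y ≠ 0, HasDerivAt (fun t : ℝ => max t 0 ^ 2) (2 * max y 0) y := by
    intro y hy
    rcases hy.lt_or_gt with hy | hy
    · have hloc : (fun t : ℝ => max t 0 ^ 2) =ᶠ[nhds y] fun _ => 0 := by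
        filter_upwards [eventually_lt_nhds hy] with t ht
        simp [max_eq_right ht.le]
      simpa [max_eq_right hy.le] using (hasDerivAt_const y (0 : ℝ)).congr_of_eventuallyEq hloc
    · have hloc : (fun t : ℝ => max t 0 ^ 2) =ᶠ[nhds y] fun t => t ^ 2 := by
        filter_upwards [eventually_gt_nhds hy] with t ht
        simp [max_eq_left ht.le]
      simpa [max_eq_left hy.le] using (hasDerivAt_pow 2 y).congr_of_eventuallyEq hloc
  rcases eq_or_ne x 0 with rfl | hx
  · exact hasDerivAt_of_hasDerivAt_of_ne off_zero (by fun_prop) (by fun_prop)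
  · exact off_zero x hx

theorem hasDerivAt_hingeEnvelope (C σ z : ℝ) :
    HasDerivAt (hingeEnvelope C σ) (σ * (max z 0 - max (z - C / σ) 0)) z := by
  have hshift := (hasDerivAt_max_zero_sq (z - C / σ)).comp z ((hasDerivAt_id z).sub_const (C / σ))
  have h := ((hasDerivAt_max_zero_sq z).sub hshift).const_mul (σ / 2)
  refine (h.congr_deriv (by ring)).congr_of_eventuallyEq (.of_eq ?_)
  funext t
  simp [hingeEnvelope, mul_sub]

theorem sub_eq_max_sub_max_of_prox {r z s : ℝ} (hr : 0 ≤ r) (h_above : r < z → s = z - r)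
    (h_below : z < 0 → s = z) (h_between : 0 ≤ z ∧ z ≤ r → s = 0) :
    z - s = max z 0 - max (z - r) 0 := by
  rcases lt_or_ge z 0 with hz | hz
  · rw [h_below hz, max_eq_right hz.le, max_eq_right (by linarith)]; ring
  rcases le_or_gt z r with hzr | hzr
  · rw [h_between ⟨hz, hzr⟩, max_eq_left hz, max_eq_right (by linarith)]
  · rw [h_above hzr, max_eq_left hz, max_eq_left (by linarith)]

theorem isLeast_hingeEnvelope {C σ : ℝ} (hC : 0 ≤ C) (hσ : 0 < σ) (z : ℝ) :
    IsLeast (range fun s => C * max s 0 + σ / 2 * (s - z) ^ 2) (hingeEnvelope C σ z) := by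
  obtain ⟨r, hr, rfl⟩ : ∃ r, 0 ≤ r ∧ C = σ * r := ⟨C / σ, div_nonneg hC hσ.le, by field_simp⟩
  have hrσ : σ * r / σ = r := by field_simp
  simp only [hingeEnvelope, hrσ]
  constructor
  · rcases lt_or_ge z 0 with hz | hz
    · refine ⟨z, ?_⟩
      simp only [max_eq_right hz.le, max_eq_right (by linarith : z - r ≤ 0)]; ring
    rcases le_or_gt z r with hzr | hzr
    · refine ⟨0, ?_⟩
      simp only [max_eq_left hz, max_eq_right (by linarith : z - r ≤ 0), max_self]; ring
    · refine ⟨z - r, ?_⟩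
      simp only [max_eq_left hz, max_eq_left (by linarith : 0 ≤ z - r)]; ring
  · rintro _ ⟨s, rfl⟩
    have key : max z 0 ^ 2 - max (z - r) 0 ^ 2 ≤ 2 * r * max s 0 + (s - z) ^ 2 := by
      rcases le_total s 0 with hs | hs <;> rcases le_total z 0 with hz | hz <;>
        rcases le_total z r with hzr | hzr <;>
        simp only [max_eq_left, max_eq_right, hs, hz, sub_nonpos, sub_nonneg, hzr] <;>
        nlinarith [sq_nonneg (s - z + r)]
    dsimp only
    nlinarith [mul_le_mul_of_nonneg_left key hσ.le]

theorem isLeast_sum_range {ι : Type*} [Fintype ι] {g : ι → ℝ → ℝ} {a : ι → ℝ}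
    (h : ∀ i, IsLeast (range (g i)) (a i)) :
    IsLeast (range fun s : EuclideanSpace ℝ ι => ∑ i, g i (s i)) (∑ i, a i) := by
  choose t ht using fun i => (h i).1
  refine ⟨⟨WithLp.toLp 2 t, by simp [ht]⟩, ?_⟩
  rintro _ ⟨s, rfl⟩
  exact Finset.sum_le_sum fun i _ => (h i).2 ⟨s i, rfl⟩

theorem neg_inner_add_half_mul_norm_sq {E : Type*} [NormedAddCommGroup E] [InnerProductSpace ℝ E]
    {σ : ℝ} (hσ : σ ≠ 0) (a u : E) :
    -⟪a, u⟫ + σ / 2 * ‖u‖ ^ 2 = σ / 2 * ‖u - σ⁻¹ • a‖ ^ 2 - ‖a‖ ^ 2 / (2 * σ) := by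
  rw [norm_sub_sq_real, inner_smul_right, norm_smul, mul_pow, real_inner_comm, Real.norm_eq_abs,
    sq_abs]
  field_simp
  ring

noncomputable def augLagrangian {m n : ℕ} (C σ : ℝ) (B : Matrix (Fin m) (Fin n) ℝ)
    (d lam : EuclideanSpace ℝ (Fin m)) (w : EuclideanSpace ℝ (Fin n))
    (s : EuclideanSpace ℝ (Fin m)) : ℝ :=
  (1 / 2) * ‖w‖ ^ 2 + C * ∑ i, max (s i) 0 - ⟪lam, s - toEuc (B.mulVec w) - d⟫ +
    (σ / 2) * ‖s - toEuc (B.mulVec w) - d‖ ^ 2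

theorem augLagrangian_eq {m n : ℕ} {C σ : ℝ} (hσ : σ ≠ 0) (B : Matrix (Fin m) (Fin n) ℝ)
    (d lam : EuclideanSpace ℝ (Fin m)) (w : EuclideanSpace ℝ (Fin n))
    (s : EuclideanSpace ℝ (Fin m)) :
    augLagrangian C σ B d lam w s = (1 / 2) * ‖w‖ ^ 2 - ‖lam‖ ^ 2 / (2 * σ) +
      ∑ i, (C * max (s i) 0 + σ / 2 * (s i - (toEuc (B *ᵥ w) + d + σ⁻¹ • lam) i) ^ 2) := by
  have hshift : s - toEuc (B *ᵥ w) - d - σ⁻¹ • lam = s - (toEuc (B *ᵥ w) + d + σ⁻¹ • lam) := by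
    abel
  have hsq := neg_inner_add_half_mul_norm_sq hσ lam (s - toEuc (B *ᵥ w) - d)
  rw [hshift, EuclideanSpace.norm_sq_eq (s - _)] at hsq
  rw [augLagrangian, Finset.sum_add_distrib, ← Finset.mul_sum, ← Finset.mul_sum]
  simp only [Real.norm_eq_abs, sq_abs, PiLp.sub_apply] at hsq ⊢
  linarith

theorem iInf_augLagrangian_eq {m n : ℕ} {C σ : ℝ} (hC : 0 ≤ C) (hσ : 0 < σ)
    (B : Matrix (Fin m) (Fin n) ℝ) (d lam : EuclideanSpace ℝ (Fin m))
    (w : EuclideanSpace ℝ (Fin n)) :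
    ⨅ s, augLagrangian C σ B d lam w s = (1 / 2) * ‖w‖ ^ 2 - ‖lam‖ ^ 2 / (2 * σ) +
      ∑ i, hingeEnvelope C σ ((toEuc (B *ᵥ w) + d + σ⁻¹ • lam) i) := by
  have h := isLeast_sum_range fun i =>
    isLeast_hingeEnvelope hC hσ ((toEuc (B *ᵥ w) + d + σ⁻¹ • lam) i)
  have h' := (monotone_id.const_add ((1 / 2) * ‖w‖ ^ 2 - ‖lam‖ ^ 2 / (2 * σ))).map_isLeast h
  rw [← range_comp] at h'
  simp_rw [augLagrangian_eq hσ.ne']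
  exact h'.csInf_eq

/-- Let `φ(w) = inf_s L_σ(w, s; λ)` where
`L_σ(w, s; λ) = (1/2)‖w‖² + C·∑ᵢ max(sᵢ, 0) − ⟨λ, s − Bw − d⟩ + (σ/2)‖s − Bw − d‖²`.
Then `φ` is differentiable at every `w` with gradient
`∇φ(w) = w + Bᵀλ − σ·Bᵀ(s*(w) − Bw − d)`, where, with `z = Bw + d + λ/σ`, the vector
`s*(w)` has `s*(w)ᵢ = zᵢ − C/σ` if `zᵢ > C/σ`, `s*(w)ᵢ = zᵢ` if `zᵢ < 0`, and
`s*(w)ᵢ = 0` if `0 ≤ zᵢ ≤ C/σ`. -/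
theorem stmt_17 (C σ : ℝ) (hC : 0 < C) (hσ : 0 < σ) (m n : ℕ)
    (B : Matrix (Fin m) (Fin n) ℝ) (d lam : EuclideanSpace ℝ (Fin m))
    (φ : EuclideanSpace ℝ (Fin n) → ℝ)
    (hφ : ∀ w : EuclideanSpace ℝ (Fin n),
      φ w = ⨅ s : EuclideanSpace ℝ (Fin m),
        (1 / 2) * ‖w‖ ^ 2 + C * ∑ i, max (s i) 0 - ⟪lam, s - toEuc (B.mulVec w) - d⟫ +
          (σ / 2) * ‖s - toEuc (B.mulVec w) - d‖ ^ 2) :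
    ∀ w : EuclideanSpace ℝ (Fin n), ∀ z sstar : EuclideanSpace ℝ (Fin m),
      z = toEuc (B.mulVec w) + d + σ⁻¹ • lam →
      (∀ i : Fin m,
        (C / σ < z i → sstar i = z i - C / σ) ∧
        (z i < 0 → sstar i = z i) ∧
        (0 ≤ z i ∧ z i ≤ C / σ → sstar i = 0)) →
      HasGradientAt φ
        (w + toEuc (Bᵀ.mulVec lam) -
          σ • toEuc (Bᵀ.mulVec (sstar - toEuc (B.mulVec w) - d))) w := by
  intro w z sstar hz hsstar
  have hφ_eq : φ = fun w => (1 / 2) * ‖w‖ ^ 2 +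
      ∑ i, hingeEnvelope C σ ((toEuclideanLin B w + (d + σ⁻¹ • lam)) i) - ‖lam‖ ^ 2 / (2 * σ) := by
    funext w
    rw [hφ w, ← add_assoc, ← toEuc_mulVec]
    exact (iInf_augLagrangian_eq hC.le hσ B d lam w).trans (by ring)
  have henv : HasGradientAt (fun y => ∑ i, hingeEnvelope C σ (y i)) (σ • (z - sstar)) z := by
    convert hasGradientAt_sum_apply fun i => hasDerivAt_hingeEnvelope C σ (z i) using 1
    ext i
    obtain ⟨h_above, h_below, h_between⟩ := hsstar i
    simp [sub_eq_max_sub_max_of_prox (div_pos hC hσ).le h_above h_below h_between]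
  rw [hz, add_assoc, toEuc_mulVec] at henv
  have hgrad := ((hasGradientAt_half_norm_sq w).add
    (henv.comp_toEuclideanLin_add B)).sub_const (‖lam‖ ^ 2 / (2 * σ))
  have hscaled : σ • (toEuclideanLin B w + (d + σ⁻¹ • lam) - sstar) =
      lam - σ • (sstar - toEuclideanLin B w - d) := by
    rw [smul_sub, smul_add, smul_add, smul_inv_smul₀ hσ.ne', smul_sub, smul_sub]
    abel
  rw [hφ_eq, add_sub_assoc]
  rwa [hscaled, map_sub, map_smul] at hgrad
end

section
/- Let C > 0, σ > 0, m, n ∈ ℕ, B ∈ ℝ^{m×n}, d ∈ ℝ^m and λ ∈ ℝ^m. Then the function φ(w) = inf over s ∈ ℝ^m of L_σ(w, s; λ) is strongly convex on ℝ^n with parameter 1 (i.e. w ↦ φ(w) − (1/2)‖w‖² is convex and φ is continuous), and φ attains its minimum over ℝ^n at a unique point. -/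
set_option maxHeartbeats 1000000


open RealInnerProductSpace

section Aux

variable {m : ℕ} (C σ : ℝ) (lam : EuclideanSpace ℝ (Fin m))

/-- The inner objective as a function of the "shift" `u` and the variable `s`. -/
noncomputable def auxF (u s : EuclideanSpace ℝ (Fin m)) : ℝ :=
  C * ∑ i, max (s i) 0 - ⟪lam, s - u⟫ + (σ / 2) * ‖s - u‖ ^ 2

/-- The value function `g(u) = inf_s auxF u s`. -/
noncomputable def auxG (u : EuclideanSpace ℝ (Fin m)) : ℝ :=
  ⨅ s, auxF C σ lam u s

variable {C σ}

lemma auxF_lb (hC : 0 ≤ C) (hσ : 0 < σ) (u s : EuclideanSpace ℝ (Fin m)) :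
    -‖lam‖ ^ 2 / (2 * σ) ≤ auxF C σ lam u s := by
  have h1 : 0 ≤ C * ∑ i, max (s i) 0 := by
    apply mul_nonneg hC
    exact Finset.sum_nonneg fun i _ => le_max_right _ _
  have h2 : |⟪lam, s - u⟫| ≤ ‖lam‖ * ‖s - u‖ := abs_real_inner_le_norm _ _
  have h3 : 0 ≤ ‖s - u‖ := norm_nonneg _
  have h4 : 0 ≤ ‖lam‖ := norm_nonneg _
  have h5 : -(‖lam‖ * ‖s - u‖) ≤ -⟪lam, s - u⟫ := by
    have := (abs_le.mp h2).2; linarith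
  unfold auxF
  have key : -‖lam‖ ^ 2 / (2 * σ) ≤ -(‖lam‖ * ‖s - u‖) + (σ / 2) * ‖s - u‖ ^ 2 := by
    rw [div_le_iff₀ (by positivity)]
    nlinarith [sq_nonneg (σ * ‖s - u‖ - ‖lam‖)]
  linarith

lemma auxF_bddBelow (hC : 0 ≤ C) (hσ : 0 < σ) (u : EuclideanSpace ℝ (Fin m)) :
    BddBelow (Set.range (auxF C σ lam u)) :=
  ⟨-‖lam‖ ^ 2 / (2 * σ), by rintro x ⟨s, rfl⟩; exact auxF_lb lam hC hσ u s⟩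

lemma auxG_le (hC : 0 ≤ C) (hσ : 0 < σ) (u s : EuclideanSpace ℝ (Fin m)) :
    auxG C σ lam u ≤ auxF C σ lam u s :=
  ciInf_le (auxF_bddBelow lam hC hσ u) s

lemma auxG_lb (hC : 0 ≤ C) (hσ : 0 < σ) (u : EuclideanSpace ℝ (Fin m)) :
    -‖lam‖ ^ 2 / (2 * σ) ≤ auxG C σ lam u :=
  le_ciInf fun s => auxF_lb lam hC hσ u s

/-- Joint convexity of `auxF`. -/
lemma auxF_convex (hC : 0 ≤ C) (hσ : 0 < σ) (u₁ u₂ s₁ s₂ : EuclideanSpace ℝ (Fin m))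
    {a b : ℝ} (ha : 0 ≤ a) (hb : 0 ≤ b) (hab : a + b = 1) :
    auxF C σ lam (a • u₁ + b • u₂) (a • s₁ + b • s₂) ≤
      a * auxF C σ lam u₁ s₁ + b * auxF C σ lam u₂ s₂ := by
  have hdiff : (a • s₁ + b • s₂) - (a • u₁ + b • u₂) = a • (s₁ - u₁) + b • (s₂ - u₂) := by
    module
  -- max part
  have hmax : ∑ i, max ((a • s₁ + b • s₂) i) 0 ≤
      a * ∑ i, max (s₁ i) 0 + b * ∑ i, max (s₂ i) 0 := by
    rw [Finset.mul_sum, Finset.mul_sum, ← Finset.sum_add_distrib]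
    apply Finset.sum_le_sum
    intro i _
    have hi : (a • s₁ + b • s₂) i = a * s₁ i + b * s₂ i := rfl
    rw [hi]
    apply max_le
    · have h1 : a * s₁ i ≤ a * max (s₁ i) 0 :=
        mul_le_mul_of_nonneg_left (le_max_left _ _) ha
      have h2 : b * s₂ i ≤ b * max (s₂ i) 0 :=
        mul_le_mul_of_nonneg_left (le_max_left _ _) hb
      linarith
    · have h1 : 0 ≤ a * max (s₁ i) 0 := mul_nonneg ha (le_max_right _ _)
      have h2 : 0 ≤ b * max (s₂ i) 0 := mul_nonneg hb (le_max_right _ _)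
      linarith
  -- inner part
  have hinner : ⟪lam, (a • s₁ + b • s₂) - (a • u₁ + b • u₂)⟫ =
      a * ⟪lam, s₁ - u₁⟫ + b * ⟪lam, s₂ - u₂⟫ := by
    rw [hdiff, inner_add_right, real_inner_smul_right, real_inner_smul_right]
  -- norm part
  have hnorm : ‖(a • s₁ + b • s₂) - (a • u₁ + b • u₂)‖ ^ 2 ≤
      a * ‖s₁ - u₁‖ ^ 2 + b * ‖s₂ - u₂‖ ^ 2 := by
    rw [hdiff]
    have h1 : ‖a • (s₁ - u₁) + b • (s₂ - u₂)‖ ≤ a * ‖s₁ - u₁‖ + b * ‖s₂ - u₂‖ := by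
      refine (norm_add_le _ _).trans ?_
      rw [norm_smul, norm_smul, Real.norm_eq_abs, Real.norm_eq_abs,
        abs_of_nonneg ha, abs_of_nonneg hb]
    have h2 : 0 ≤ ‖a • (s₁ - u₁) + b • (s₂ - u₂)‖ := norm_nonneg _
    nlinarith [sq_nonneg (‖s₁ - u₁‖ - ‖s₂ - u₂‖), mul_nonneg ha hb,
      norm_nonneg (s₁ - u₁), norm_nonneg (s₂ - u₂)]
  unfold auxF
  rw [hinner]
  have hCσ : 0 ≤ σ / 2 := by positivity
  nlinarith [mul_le_mul_of_nonneg_left hmax hC, mul_le_mul_of_nonneg_left hnorm hCσ]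

/-- Convexity of `auxG`. -/
lemma auxG_convex (hC : 0 ≤ C) (hσ : 0 < σ) (u₁ u₂ : EuclideanSpace ℝ (Fin m))
    {a b : ℝ} (ha : 0 ≤ a) (hb : 0 ≤ b) (hab : a + b = 1) :
    auxG C σ lam (a • u₁ + b • u₂) ≤ a * auxG C σ lam u₁ + b * auxG C σ lam u₂ := by
  apply le_of_forall_pos_le_add
  intro ε hε
  obtain ⟨s₁, hs₁⟩ : ∃ s, auxF C σ lam u₁ s < auxG C σ lam u₁ + ε :=
    exists_lt_of_ciInf_lt (lt_add_of_pos_right (auxG C σ lam u₁) hε)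
  obtain ⟨s₂, hs₂⟩ : ∃ s, auxF C σ lam u₂ s < auxG C σ lam u₂ + ε :=
    exists_lt_of_ciInf_lt (lt_add_of_pos_right (auxG C σ lam u₂) hε)
  calc auxG C σ lam (a • u₁ + b • u₂) ≤ auxF C σ lam (a • u₁ + b • u₂) (a • s₁ + b • s₂) :=
        auxG_le lam hC hσ _ _
    _ ≤ a * auxF C σ lam u₁ s₁ + b * auxF C σ lam u₂ s₂ :=
        auxF_convex lam hC hσ u₁ u₂ s₁ s₂ ha hb hab
    _ ≤ a * (auxG C σ lam u₁ + ε) + b * (auxG C σ lam u₂ + ε) := by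
        have h1 := mul_le_mul_of_nonneg_left hs₁.le ha
        have h2 := mul_le_mul_of_nonneg_left hs₂.le hb
        linarith
    _ = a * auxG C σ lam u₁ + b * auxG C σ lam u₂ + ε := by
        have : a * ε + b * ε = ε := by rw [← add_mul, hab, one_mul]
        ring_nf
        nlinarith [this]

/-- One-sided Lipschitz bound for `auxG`. -/
lemma auxG_lip (hC : 0 ≤ C) (hσ : 0 < σ) (u u' : EuclideanSpace ℝ (Fin m)) :
    auxG C σ lam u ≤ auxG C σ lam u' + C * m * ‖u - u'‖ := by
  have key : ∀ s : EuclideanSpace ℝ (Fin m),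
      auxG C σ lam u ≤ auxF C σ lam u' s + C * m * ‖u - u'‖ := by
    intro s
    have h1 : auxG C σ lam u ≤ auxF C σ lam u (s + (u - u')) := auxG_le lam hC hσ _ _
    refine h1.trans ?_
    unfold auxF
    have heq : s + (u - u') - u = s - u' := by module
    rw [heq]
    have hsum : ∑ i, max ((s + (u - u')) i) 0 ≤ (∑ i, max (s i) 0) + m * ‖u - u'‖ := by
      have hle : ∀ i : Fin m, max ((s + (u - u')) i) 0 ≤ max (s i) 0 + ‖u - u'‖ := by
        intro i
        have hi : (s + (u - u')) i = s i + (u - u') i := rfl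
        have habs : |(u - u') i| ≤ ‖u - u'‖ := by
          have := EuclideanSpace.norm_eq (u - u')
          have hsq : ((u - u') i) ^ 2 ≤ ∑ j, ((u - u') j) ^ 2 := by
            apply Finset.single_le_sum (f := fun j => ((u - u') j) ^ 2)
            · intro j _; positivity
            · exact Finset.mem_univ i
          rw [this]
          rw [← Real.sqrt_sq_eq_abs]
          apply Real.sqrt_le_sqrt
          simpa [sq_abs] using hsq
        rw [hi]
        apply max_le
        · have : (u - u') i ≤ ‖u - u'‖ := (abs_le.mp habs).2
          have := le_max_left (s i) 0
          linarith
        · have := le_max_right (s i) 0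
          have := norm_nonneg (u - u')
          linarith
      calc ∑ i, max ((s + (u - u')) i) 0 ≤ ∑ i : Fin m, (max (s i) 0 + ‖u - u'‖) :=
            Finset.sum_le_sum fun i _ => hle i
        _ = (∑ i, max (s i) 0) + m * ‖u - u'‖ := by
            rw [Finset.sum_add_distrib, Finset.sum_const, Finset.card_univ,
              Fintype.card_fin, nsmul_eq_mul]
      -- end
    have := mul_le_mul_of_nonneg_left hsum hC
    linarith [this]
  have h2 : auxG C σ lam u - C * m * ‖u - u'‖ ≤ auxG C σ lam u' :=
    le_ciInf fun s => by linarith [key s]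
  linarith

lemma auxG_continuous (hC : 0 ≤ C) (hσ : 0 < σ) :
    Continuous (auxG C σ lam) := by
  have hL : 0 ≤ C * m := by positivity
  apply LipschitzWith.continuous (K := Real.toNNReal (C * m))
  apply LipschitzWith.of_dist_le_mul
  intro u u'
  rw [Real.dist_eq, Real.coe_toNNReal _ hL, dist_eq_norm]
  rw [abs_sub_le_iff]
  constructor
  · linarith [auxG_lip lam hC hσ u u']
  · have := auxG_lip lam hC hσ u' u
    rw [norm_sub_rev] at this
    linarith

end Aux

/-- The linear map `w ↦ B w` as a map of Euclidean spaces. -/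
noncomputable def auxA {m n : ℕ} (B : Matrix (Fin m) (Fin n) ℝ) :
    EuclideanSpace ℝ (Fin n) →ₗ[ℝ] EuclideanSpace ℝ (Fin m) where
  toFun w := toEuc (B.mulVec w)
  map_add' x y := by
    apply PiLp.ext
    intro i
    show B.mulVec (x + y) i = B.mulVec x i + B.mulVec y i
    simp [Matrix.mulVec, dotProduct, mul_add, Finset.sum_add_distrib]
  map_smul' c x := by
    apply PiLp.ext
    intro i
    show B.mulVec (c • x) i = c * B.mulVec x i
    simp [Matrix.mulVec, dotProduct, Finset.mul_sum]
    apply Finset.sum_congr rfl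
    intro j _
    show B i j * (c * x j) = c * (B i j * x j)
    ring

/-- The function `φ(w) = inf_s L_σ(w, s; λ)`, where
`L_σ(w, s; λ) = (1/2)‖w‖² + C·∑ᵢ max(sᵢ, 0) − ⟨λ, s − Bw − d⟩ + (σ/2)‖s − Bw − d‖²`,
is strongly convex with parameter 1 (i.e. `w ↦ φ(w) − (1/2)‖w‖²` is convex and `φ` is
continuous), and `φ` attains its minimum over `ℝ^n` at a unique point. -/
theorem stmt_18 (C σ : ℝ) (hC : 0 < C) (hσ : 0 < σ) (m n : ℕ)
    (B : Matrix (Fin m) (Fin n) ℝ) (d lam : EuclideanSpace ℝ (Fin m))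
    (φ : EuclideanSpace ℝ (Fin n) → ℝ)
    (hφ : ∀ w : EuclideanSpace ℝ (Fin n),
      φ w = ⨅ s : EuclideanSpace ℝ (Fin m),
        (1 / 2) * ‖w‖ ^ 2 + C * ∑ i, max (s i) 0 - ⟪lam, s - toEuc (B.mulVec w) - d⟫ +
          (σ / 2) * ‖s - toEuc (B.mulVec w) - d‖ ^ 2) :
    ConvexOn ℝ Set.univ (fun w : EuclideanSpace ℝ (Fin n) => φ w - (1 / 2) * ‖w‖ ^ 2) ∧
    Continuous φ ∧
    ∃! w : EuclideanSpace ℝ (Fin n), ∀ v : EuclideanSpace ℝ (Fin n), φ w ≤ φ v := by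
  have hC' : (0 : ℝ) ≤ C := hC.le
  set A := auxA B with hA
  -- Key reformulation
  have hkey : ∀ w, φ w = (1 / 2) * ‖w‖ ^ 2 + auxG C σ lam (A w + d) := by
    intro w
    rw [hφ w]
    have hptwise : ∀ s : EuclideanSpace ℝ (Fin m),
        (1 / 2) * ‖w‖ ^ 2 + C * ∑ i, max (s i) 0 - ⟪lam, s - toEuc (B.mulVec w) - d⟫ +
          (σ / 2) * ‖s - toEuc (B.mulVec w) - d‖ ^ 2
        = (1 / 2) * ‖w‖ ^ 2 + auxF C σ lam (A w + d) s := by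
      intro s
      have h1 : s - toEuc (B.mulVec w) - d = s - (A w + d) := by
        rw [hA]; show _ = s - (toEuc (B.mulVec w) + d); rw [sub_sub]
      rw [h1]
      unfold auxF
      ring
    rw [iInf_congr hptwise]
    rw [← add_ciInf (auxF_bddBelow lam hC' hσ _)]
    rfl
  -- affine combination identity
  have haff : ∀ (x y : EuclideanSpace ℝ (Fin n)) (a b : ℝ), a + b = 1 →
      A (a • x + b • y) + d = a • (A x + d) + b • (A y + d) := by
    intro x y a b hab
    have hd : a • d + b • d = d := by rw [← add_smul, hab, one_smul]
    conv_rhs => rw [smul_add, smul_add]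
    rw [map_add, map_smul, map_smul]
    conv_lhs => rw [← hd]
    abel
  -- Part 1: convexity
  have part1 : ConvexOn ℝ Set.univ
      (fun w : EuclideanSpace ℝ (Fin n) => φ w - (1 / 2) * ‖w‖ ^ 2) := by
    refine ⟨convex_univ, ?_⟩
    intro x _ y _ a b ha hb hab
    simp only [smul_eq_mul]
    rw [hkey x, hkey y, hkey (a • x + b • y)]
    have h1 := auxG_convex lam hC' hσ (A x + d) (A y + d) ha hb hab
    rw [← haff x y a b hab] at h1
    linarith
  -- Part 2: continuity
  have hAcont : Continuous fun w => A w + d :=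
    (A.continuous_of_finiteDimensional).add continuous_const
  have part2 : Continuous φ := by
    have : φ = fun w => (1 / 2) * ‖w‖ ^ 2 + auxG C σ lam (A w + d) := funext hkey
    rw [this]
    exact (continuous_const.mul ((continuous_norm).pow 2)).add
      ((auxG_continuous lam hC' hσ).comp hAcont)
  refine ⟨part1, part2, ?_⟩
  -- Part 3: existence and uniqueness of minimizer
  -- lower bound constant
  set c₀ : ℝ := -‖lam‖ ^ 2 / (2 * σ) with hc₀
  have hφ0 : φ 0 = auxG C σ lam (A 0 + d) := by
    rw [hkey 0]; simp
  have hlbφ : ∀ v, (1 / 2) * ‖v‖ ^ 2 + c₀ ≤ φ v := by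
    intro v
    rw [hkey v]
    have := auxG_lb lam hC' hσ (A v + d)
    linarith
  have hφ0c₀ : c₀ ≤ φ 0 := by
    have := hlbφ 0; simp at this; linarith
  set R : ℝ := Real.sqrt (2 * (φ 0 - c₀)) + 1 with hR
  have hRpos : 0 < R := by positivity
  have houtside : ∀ v : EuclideanSpace ℝ (Fin n), R < ‖v‖ → φ 0 < φ v := by
    intro v hv
    have h1 : Real.sqrt (2 * (φ 0 - c₀)) < ‖v‖ := by linarith
    have h2 : 2 * (φ 0 - c₀) < ‖v‖ ^ 2 := by
      have hnn : 0 ≤ 2 * (φ 0 - c₀) := by linarith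
      nlinarith [Real.sq_sqrt hnn, Real.sqrt_nonneg (2 * (φ 0 - c₀))]
    have := hlbφ v
    linarith
  -- existence via compactness
  have hK : IsCompact (Metric.closedBall (0 : EuclideanSpace ℝ (Fin n)) R) :=
    isCompact_closedBall _ _
  obtain ⟨w₀, hw₀K, hw₀min⟩ := hK.exists_isMinOn
    ⟨0, Metric.mem_closedBall_self hRpos.le⟩ part2.continuousOn
  have hglobal : ∀ v, φ w₀ ≤ φ v := by
    intro v
    by_cases hv : v ∈ Metric.closedBall (0 : EuclideanSpace ℝ (Fin n)) R
    · exact hw₀min hv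
    · have h0K : (0 : EuclideanSpace ℝ (Fin n)) ∈ Metric.closedBall (0 : _) R :=
        Metric.mem_closedBall_self hRpos.le
      have hvn : R < ‖v‖ := by
        simp [Metric.mem_closedBall, dist_zero_right] at hv
        linarith
      exact (hw₀min h0K).trans (houtside v hvn).le
  refine ⟨w₀, hglobal, ?_⟩
  -- uniqueness
  intro y hy
  have heq : φ y = φ w₀ := le_antisymm (hy w₀) (hglobal y)
  by_contra hne
  -- midpoint argument
  set z : EuclideanSpace ℝ (Fin n) := (1 / 2 : ℝ) • y + (1 / 2 : ℝ) • w₀ with hz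
  have hhalf : (0:ℝ) ≤ 1/2 := by norm_num
  have hsum : (1/2 : ℝ) + 1/2 = 1 := by norm_num
  have hGz : auxG C σ lam (A z + d) ≤
      (1/2) * auxG C σ lam (A y + d) + (1/2) * auxG C σ lam (A w₀ + d) := by
    have := auxG_convex lam hC' hσ (A y + d) (A w₀ + d) hhalf hhalf hsum
    rw [← haff y w₀ (1/2) (1/2) hsum] at this
    exact this
  have hnormz : ‖z‖ ^ 2 = (1/2) * ‖y‖ ^ 2 + (1/2) * ‖w₀‖ ^ 2 - (1/4) * ‖y - w₀‖ ^ 2 := by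
    have hz2 : z = (1/2 : ℝ) • (y + w₀) := by rw [hz]; module
    rw [hz2, norm_smul]
    have hpar : ‖y + w₀‖ ^ 2 = 2 * ‖y‖ ^ 2 + 2 * ‖w₀‖ ^ 2 - ‖y - w₀‖ ^ 2 := by
      have h1 := norm_add_sq_real y w₀
      have h2 := norm_sub_sq_real y w₀
      linarith
    rw [mul_pow]
    rw [hpar]
    norm_num
    ring
  have hφz : φ z ≤ (1/2) * φ y + (1/2) * φ w₀ - (1/8) * ‖y - w₀‖ ^ 2 := by
    rw [hkey z, hkey y, hkey w₀]
    linarith [hGz, hnormz.le, hnormz.ge]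
  have hyz : φ y ≤ φ z := hy z
  have hzero : ‖y - w₀‖ ^ 2 ≤ 0 := by linarith
  have : ‖y - w₀‖ = 0 := by
    have := norm_nonneg (y - w₀)
    nlinarith
  exact hne (by rwa [← sub_eq_zero, ← norm_eq_zero])
end
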